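/- arXiv:2605.11168 — 4 statements merged into one kernel-verified Lean document; each statement's English description precedes it below -/
import Mathlib

section
/- For every n ≥ 1 and every μ ∈ ℝ^p, the Kullback–Leibler divergence KL(N(μ, S_n) ‖ N(μ, Σ_n)) equals −(1/2) · log( det(n⁻¹ I + B) / ∏_{j=1}^p (n⁻¹ + B_{jj}) ). -/
open MeasureTheory Matrix Filter

/-- Posterior covariance `Σ_k = (I + kB)⁻¹` in the Gaussian location model. -/
noncomputable def Sig {p : ℕ} (B : Matrix (Fin p) (Fin p) ℝ) (k : ℕ) :
    Matrix (Fin p) (Fin p) ℝ :=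
  (1 + (k : ℝ) • B)⁻¹

/-- Mean-field covariance `S_k = diag((1 + k B_jj)⁻¹)`. -/
noncomputable def Sdiag {p : ℕ} (B : Matrix (Fin p) (Fin p) ℝ) (k : ℕ) :
    Matrix (Fin p) (Fin p) ℝ :=
  Matrix.diagonal fun j => (1 + (k : ℝ) * B j j)⁻¹

/-- Spectral norm (L2 operator norm) of a real square matrix. -/
noncomputable def specNorm {p : ℕ} (M : Matrix (Fin p) (Fin p) ℝ) : ℝ :=
  ‖(Matrix.toEuclideanCLM (𝕜 := ℝ) M : EuclideanSpace ℝ (Fin p) →L[ℝ] EuclideanSpace ℝ (Fin p))‖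

/-- Density of the multivariate Gaussian `N(μ, C)` on `ℝ^p` (with respect to Lebesgue measure),
for `C` symmetric positive definite. -/
noncomputable def gaussDensity {p : ℕ} (μ : Fin p → ℝ) (C : Matrix (Fin p) (Fin p) ℝ)
    (y : Fin p → ℝ) : ℝ :=
  (2 * Real.pi) ^ (-(p : ℝ) / 2) * C.det ^ (-(1 : ℝ) / 2) *
    Real.exp (-(1 / 2 : ℝ) * ((y - μ) ⬝ᵥ (C⁻¹ *ᵥ (y - μ))))

/-- Kullback–Leibler divergence `KL(N(μ₁, C₁) ‖ N(μ₂, C₂))` between multivariate Gaussian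
distributions, written as the integral of the log density ratio. -/
noncomputable def klGauss {p : ℕ} (μ₁ : Fin p → ℝ) (C₁ : Matrix (Fin p) (Fin p) ℝ)
    (μ₂ : Fin p → ℝ) (C₂ : Matrix (Fin p) (Fin p) ℝ) : ℝ :=
  ∫ y : Fin p → ℝ,
    gaussDensity μ₁ C₁ y * Real.log (gaussDensity μ₁ C₁ y / gaussDensity μ₂ C₂ y)

/-!
Write `Q := Σ_n⁻¹ = 1 + n • B`; the mean-field precision `S_n⁻¹` is the diagonal of `Q`. Hence the
log density ratio at `μ + z` is the constant `-(1/2) log (det Q / ∏ Q_jj)` plus half the quadratic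
form of `Q - diag Q`, which has zero diagonal. Under the product density `N(0, S_n)` the coordinates
are independent and centred, so every off-diagonal monomial `z_i z_j` integrates to zero and the KL
divergence is the constant. Finally `det Q / ∏ Q_jj` is unchanged when `Q` is scaled by `n⁻¹`.
-/

open Real

/-- The centred Gaussian density on `ℝ` with precision `b`, written in the `rpow` form of
`gaussDensity` so that products of it are diagonal `gaussDensity`s. -/
noncomputable def gaussPDFPrec (b t : ℝ) : ℝ :=
  (2 * π) ^ (-(1 : ℝ) / 2) * b⁻¹ ^ (-(1 : ℝ) / 2) * exp (-(1 / 2 : ℝ) * (b * t ^ 2))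

section gaussPDFPrec

variable {b : ℝ}

lemma gaussPDFPrec_eq (hb : 0 < b) (t : ℝ) :
    gaussPDFPrec b t = (√(π / (b / 2)))⁻¹ * exp (-(b / 2) * t ^ 2) := by
  have hpi : π / (b / 2) = 2 * π / b := by field_simp
  rw [gaussPDFPrec, hpi, sqrt_div' _ hb.le, neg_div, rpow_neg (by positivity),
    rpow_neg (by positivity), inv_rpow hb.le, inv_inv, ← sqrt_eq_rpow, ← sqrt_eq_rpow]
  field_simp

lemma integrable_gaussPDFPrec (hb : 0 < b) : Integrable (gaussPDFPrec b) := by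
  simp_rw [funext (gaussPDFPrec_eq hb)]
  exact (integrable_exp_neg_mul_sq (by positivity)).const_mul _

lemma integrable_mul_gaussPDFPrec (hb : 0 < b) : Integrable fun t => t * gaussPDFPrec b t := by
  simp_rw [gaussPDFPrec_eq hb, mul_left_comm _ (√(π / (b / 2)))⁻¹]
  exact (integrable_mul_exp_neg_mul_sq (by positivity)).const_mul _

lemma integral_gaussPDFPrec (hb : 0 < b) : ∫ t, gaussPDFPrec b t = 1 := by
  simp_rw [gaussPDFPrec_eq hb]
  rw [integral_const_mul, integral_gaussian]
  exact inv_mul_cancel₀ (by positivity)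

lemma integral_mul_gaussPDFPrec (b : ℝ) : ∫ t, t * gaussPDFPrec b t = 0 := by
  have hodd : ∀ t, -t * gaussPDFPrec b (-t) = -(t * gaussPDFPrec b t) := fun t => by
    simp [gaussPDFPrec]
  have h := integral_neg_eq_self (fun t => t * gaussPDFPrec b t) volume
  simp only [hodd, integral_neg] at h
  linarith

end gaussPDFPrec

section ProductDensity

variable {ι : Type*} [Fintype ι] {f : ι → ℝ → ℝ}

lemma mul_mul_prod_eq_prod [DecidableEq ι] (f : ι → ℝ → ℝ) (i j : ι) (z : ι → ℝ) :
    z i * z j * ∏ k, f k (z k) =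
      ∏ k, (if k = i then z k else 1) * (if k = j then z k else 1) * f k (z k) := by
  simp only [Finset.prod_mul_distrib, Finset.prod_ite_eq', Finset.mem_univ, if_true]

lemma integrable_mul_mul_prod (hf : ∀ k, Integrable (f k))
    (hf' : ∀ k, Integrable fun t => t * f k t) {i j : ι} (hij : i ≠ j) :
    Integrable fun z : ι → ℝ => z i * z j * ∏ k, f k (z k) := by
  classical
  simp_rw [mul_mul_prod_eq_prod]
  refine Integrable.fintype_prod
    (f := fun k t => (if k = i then t else 1) * (if k = j then t else 1) * f k t) fun k => ?_
  by_cases hi : k = i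
  · subst hi; simpa [hij] using hf' k
  by_cases hj : k = j
  · subst hj; simpa [hi] using hf' k
  simpa [hi, hj] using hf k

lemma integral_mul_mul_prod_eq_zero {i j : ι} (hij : i ≠ j) (hi : ∫ t, t * f i t = 0) :
    ∫ z : ι → ℝ, z i * z j * ∏ k, f k (z k) = 0 := by
  classical
  simp_rw [mul_mul_prod_eq_prod]
  rw [integral_fintype_prod_volume_eq_prod
    (fun k t => (if k = i then t else 1) * (if k = j then t else 1) * f k t)]
  exact Finset.prod_eq_zero (Finset.mem_univ i) (by simpa [hij] using hi)

lemma dotProduct_mulVec_mul_eq_sum (M : Matrix ι ι ℝ) (z : ι → ℝ) (c : ℝ) :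
    z ⬝ᵥ M *ᵥ z * c = ∑ i, ∑ j, M i j * (z i * z j * c) := by
  simp only [dotProduct, mulVec, Finset.sum_mul, Finset.mul_sum]
  exact Finset.sum_congr rfl fun i _ => Finset.sum_congr rfl fun j _ => by ring

variable {M : Matrix ι ι ℝ}

lemma integrable_entry_mul_mul_prod (hM : ∀ i, M i i = 0) (hf : ∀ k, Integrable (f k))
    (hf' : ∀ k, Integrable fun t => t * f k t) (i j : ι) :
    Integrable fun z : ι → ℝ => M i j * (z i * z j * ∏ k, f k (z k)) := by
  by_cases hij : i = j
  · subst hij; simp [hM]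
  · exact (integrable_mul_mul_prod hf hf' hij).const_mul _

lemma integrable_dotProduct_mulVec_mul_prod (hM : ∀ i, M i i = 0) (hf : ∀ k, Integrable (f k))
    (hf' : ∀ k, Integrable fun t => t * f k t) :
    Integrable fun z : ι → ℝ => z ⬝ᵥ M *ᵥ z * ∏ k, f k (z k) := by
  simp_rw [dotProduct_mulVec_mul_eq_sum]
  exact integrable_finsetSum _ fun i _ => integrable_finsetSum _ fun j _ =>
    integrable_entry_mul_mul_prod hM hf hf' i j

lemma integral_dotProduct_mulVec_mul_prod_eq_zero (hM : ∀ i, M i i = 0)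
    (hf : ∀ k, Integrable (f k)) (hf' : ∀ k, Integrable fun t => t * f k t)
    (hcenter : ∀ k, ∫ t, t * f k t = 0) :
    ∫ z : ι → ℝ, z ⬝ᵥ M *ᵥ z * ∏ k, f k (z k) = 0 := by
  have hentry := integrable_entry_mul_mul_prod hM hf hf'
  simp_rw [dotProduct_mulVec_mul_eq_sum]
  rw [integral_finsetSum _ fun i _ => integrable_finsetSum _ fun j _ => hentry i j]
  refine Finset.sum_eq_zero fun i _ => ?_
  rw [integral_finsetSum _ fun j _ => hentry i j]
  refine Finset.sum_eq_zero fun j _ => ?_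
  by_cases hij : i = j
  · subst hij; simp [hM]
  · rw [integral_const_mul, integral_mul_mul_prod_eq_zero hij (hcenter i), mul_zero]

end ProductDensity

lemma inv_diagonal_inv {n K : Type*} [Fintype n] [DecidableEq n] [Field K] {b : n → K}
    (hb : ∀ j, b j ≠ 0) : (diagonal fun j => (b j)⁻¹)⁻¹ = diagonal b := by
  refine inv_eq_left_inv ?_
  rw [diagonal_mul_diagonal, ← diagonal_one]
  exact congrArg diagonal (funext fun j => mul_inv_cancel₀ (hb j))

section gaussDensity

variable {p : ℕ} {C C₁ C₂ : Matrix (Fin p) (Fin p) ℝ}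

lemma gaussDensity_pos (μ : Fin p → ℝ) (hC : 0 < C.det) (y : Fin p → ℝ) :
    0 < gaussDensity μ C y := by
  unfold gaussDensity
  have := rpow_pos_of_pos hC (-(1 : ℝ) / 2)
  have := rpow_pos_of_pos (by positivity : (0 : ℝ) < 2 * π) (-(p : ℝ) / 2)
  positivity

lemma log_gaussDensity (μ : Fin p → ℝ) (hC : 0 < C.det) (y : Fin p → ℝ) :
    log (gaussDensity μ C y) =
      -(p / 2) * log (2 * π) - 1 / 2 * log C.det - 1 / 2 * ((y - μ) ⬝ᵥ C⁻¹ *ᵥ (y - μ)) := by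
  have h2π := rpow_pos_of_pos (by positivity : (0 : ℝ) < 2 * π) (-(p : ℝ) / 2)
  have hdet := rpow_pos_of_pos hC (-(1 : ℝ) / 2)
  rw [gaussDensity, log_mul (by positivity) (exp_ne_zero _), log_mul h2π.ne' hdet.ne',
    log_rpow (by positivity), log_rpow hC, log_exp]
  ring

lemma log_gaussDensity_div (μ : Fin p → ℝ) (hC₁ : 0 < C₁.det) (hC₂ : 0 < C₂.det)
    (y : Fin p → ℝ) :
    log (gaussDensity μ C₁ y / gaussDensity μ C₂ y) =
      1 / 2 * log (C₂.det / C₁.det) + 1 / 2 * ((y - μ) ⬝ᵥ (C₂⁻¹ - C₁⁻¹) *ᵥ (y - μ)) := by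
  rw [log_div (gaussDensity_pos μ hC₁ y).ne' (gaussDensity_pos μ hC₂ y).ne',
    log_gaussDensity μ hC₁, log_gaussDensity μ hC₂, log_div hC₂.ne' hC₁.ne', sub_mulVec,
    dotProduct_sub]
  ring

lemma gaussDensity_diagonal_inv {b : Fin p → ℝ} (hb : ∀ j, 0 < b j) (μ z : Fin p → ℝ) :
    gaussDensity μ (diagonal fun j => (b j)⁻¹) (μ + z) = ∏ j, gaussPDFPrec (b j) (z j) := by
  have hconst : ∏ _j : Fin p, (2 * π) ^ (-(1 : ℝ) / 2) = (2 * π) ^ (-(p : ℝ) / 2) := by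
    rw [Finset.prod_const, Finset.card_univ, Fintype.card_fin, ← rpow_natCast,
      ← rpow_mul (by positivity)]
    ring_nf
  simp only [gaussDensity, gaussPDFPrec, Finset.prod_mul_distrib, ← exp_sum, add_sub_cancel_left,
    inv_diagonal_inv fun j => (hb j).ne', det_diagonal, hconst,
    finsetProd_rpow _ _ (fun j _ => (inv_pos.mpr (hb j)).le), dotProduct, mulVec_diagonal,
    Finset.mul_sum]
  congr 2
  exact Finset.sum_congr rfl fun j _ => by ring

end gaussDensity

theorem klGauss_diagonal_inv_diag {p : ℕ} (Q : Matrix (Fin p) (Fin p) ℝ)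
    (hdiag : ∀ j, 0 < Q j j) (hdet : 0 < Q.det) (μ : Fin p → ℝ) :
    klGauss μ (diagonal fun j => (Q j j)⁻¹) μ Q⁻¹ = -(1 / 2) * log (Q.det / ∏ j, Q j j) := by
  set P : (Fin p → ℝ) → ℝ := fun z => ∏ j, gaussPDFPrec (Q j j) (z j)
  set M := Q - diagonal fun j => Q j j
  have hM : ∀ i, M i i = 0 := fun i => by simp [M]
  have hdet₁ : 0 < (diagonal fun j => (Q j j)⁻¹).det := by
    rw [det_diagonal]; exact Finset.prod_pos fun j _ => inv_pos.mpr (hdiag j)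
  have hdet₂ : 0 < Q⁻¹.det := by
    rw [det_nonsing_inv, Ring.inverse_eq_inv']; exact inv_pos.mpr hdet
  have hconst : 1 / 2 * log (Q⁻¹.det / (diagonal fun j => (Q j j)⁻¹).det) =
      -(1 / 2) * log (Q.det / ∏ j, Q j j) := by
    rw [det_nonsing_inv, Ring.inverse_eq_inv', det_diagonal, Finset.prod_inv_distrib, inv_div_inv,
      log_div (Finset.prod_pos fun j _ => hdiag j).ne' hdet.ne',
      log_div hdet.ne' (Finset.prod_pos fun j _ => hdiag j).ne']
    ring
  have hintegrand : ∀ z, gaussDensity μ (diagonal fun j => (Q j j)⁻¹) (μ + z) *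
      log (gaussDensity μ (diagonal fun j => (Q j j)⁻¹) (μ + z) / gaussDensity μ Q⁻¹ (μ + z)) =
      -(1 / 2) * log (Q.det / ∏ j, Q j j) * P z + 1 / 2 * (z ⬝ᵥ M *ᵥ z * P z) := fun z => by
    rw [log_gaussDensity_div μ hdet₁ hdet₂, hconst, add_sub_cancel_left,
      nonsing_inv_nonsing_inv Q hdet.ne'.isUnit, inv_diagonal_inv fun j => (hdiag j).ne',
      gaussDensity_diagonal_inv hdiag]
    ring
  have hg := fun j => integrable_gaussPDFPrec (hdiag j)
  have hg' := fun j => integrable_mul_gaussPDFPrec (hdiag j)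
  have hint : Integrable P := Integrable.fintype_prod hg
  have hint' := integrable_dotProduct_mulVec_mul_prod hM hg hg'
  rw [klGauss, ← integral_add_left_eq_self _ μ, integral_congr_ae (.of_forall hintegrand),
    integral_add (hint.const_mul _) (hint'.const_mul _), integral_const_mul, integral_const_mul,
    integral_dotProduct_mulVec_mul_prod_eq_zero hM hg hg' fun j => integral_mul_gaussPDFPrec _,
    integral_fintype_prod_volume_eq_prod (fun j t => gaussPDFPrec (Q j j) t)]
  simp [integral_gaussPDFPrec (hdiag _)]

lemma det_smul_div_prod_diag {n K : Type*} [Fintype n] [DecidableEq n] [Field K] {c : K}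
    (hc : c ≠ 0) (Q : Matrix n n K) :
    (c • Q).det / ∏ j, (c • Q) j j = Q.det / ∏ j, Q j j := by
  simp only [det_smul, Matrix.smul_apply, smul_eq_mul, Finset.prod_mul_distrib, Finset.prod_const,
    Finset.card_univ]
  exact mul_div_mul_left _ _ (pow_ne_zero _ hc)

theorem stmt_1_general (p : ℕ) (B : Matrix (Fin p) (Fin p) ℝ) (hB : B.PosDef)
    (n : ℕ) (hn : 1 ≤ n) (μ : Fin p → ℝ) :
    klGauss μ (Sdiag B n) μ (Sig B n) =
      -(1 / 2 : ℝ) *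
        Real.log ((((n : ℝ)⁻¹ • (1 : Matrix (Fin p) (Fin p) ℝ) + B).det) /
          ∏ j, ((n : ℝ)⁻¹ + B j j)) := by
  have hn0 : (n : ℝ) ≠ 0 := Nat.cast_ne_zero.mpr (by omega)
  have hQ : (1 + (n : ℝ) • B).PosDef :=
    PosDef.one.add_posSemidef (hB.posSemidef.smul n.cast_nonneg)
  have hSdiag : Sdiag B n = diagonal fun j => ((1 + (n : ℝ) • B) j j)⁻¹ := by simp [Sdiag]
  have hscale : (n : ℝ)⁻¹ • (1 : Matrix (Fin p) (Fin p) ℝ) + B =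
      (n : ℝ)⁻¹ • (1 + (n : ℝ) • B) := by
    rw [smul_add, smul_smul, inv_mul_cancel₀ hn0, one_smul]
  have hdiag : ∀ j, (n : ℝ)⁻¹ + B j j = ((n : ℝ)⁻¹ • (1 : Matrix (Fin p) (Fin p) ℝ) + B) j j :=
    fun j => by simp
  rw [hSdiag, Sig, klGauss_diagonal_inv_diag _ (fun j => hQ.diag_pos) hQ.det_pos,
    Finset.prod_congr rfl fun j _ => hdiag j, hscale, det_smul_div_prod_diag (inv_ne_zero hn0)]

/-- Finite-`n` closed form of Lemma 2: the KL divergence between the optimal mean-field Gaussian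
variational approximation `N(μ, S_n)` and the exact posterior `N(μ, Σ_n)` equals
`-(1/2) log(det(n⁻¹ I + B) / ∏_j (n⁻¹ + B_jj))`. -/
theorem stmt_1 (p : ℕ) (hp : 1 ≤ p) (B : Matrix (Fin p) (Fin p) ℝ) (hB : B.PosDef)
    (n : ℕ) (hn : 1 ≤ n) (μ : Fin p → ℝ) :
    klGauss μ (Sdiag B n) μ (Sig B n) =
      -(1 / 2 : ℝ) *
        Real.log ((((n : ℝ)⁻¹ • (1 : Matrix (Fin p) (Fin p) ℝ) + B).det) /
          ∏ j, ((n : ℝ)⁻¹ + B j j)) :=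
  stmt_1_general p B hB n hn μ
end

section
/- For n ≥ 1 and j ≥ 1 define M_{n,j} := Σ_{n+j} B (B⁻¹ + S_{n+j−1}) B Σ_{n+j}. Then there exists a constant C > 0, depending only on B, such that for every n ≥ 1 the series Σ_{j=1}^∞ M_{n,j} converges in spectral norm and ‖ Σ_{j=1}^∞ M_{n,j} − Σ_n ‖ ≤ C / n². -/
/-!
The resolvent identity `Σ_k - Σ_{k+1} = Σ_k B Σ_{k+1}` splits `M_{n,j}` as
`(Σ_{n+j} - Σ_{n+j+1}) + R_{n+j}` with `R_k = Σ_{k+1} B S_k B Σ_{k+1} - Σ_k B Σ_{k+1} B Σ_{k+1}`.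
The first part telescopes to `Σ_n`. Choose `r > 0` with `B - r • 1 ≥ 0`; then `Σ_k` and `S_k` have
norm at most `(1 + k r)⁻¹`, so `‖R_k‖ ≤ 2 ‖B‖² / (r³ k (k+1)²) ≤ ‖B‖² / r³ · (k⁻² - (k+1)⁻²)`,
and this telescoping bound sums over `k ≥ n` to `‖B‖² / (r³ n²)`.
-/

open MeasureTheory Matrix Filter

/-- The increment covariance `M_{n,j} = Σ_{n+j} B (B⁻¹ + S_{n+j-1}) B Σ_{n+j}`; the index `j : ℕ`
here corresponds to the paper's index `j + 1 ≥ 1`. -/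
noncomputable def Mnj {p : ℕ} (B : Matrix (Fin p) (Fin p) ℝ) (n j : ℕ) :
    Matrix (Fin p) (Fin p) ℝ :=
  Sig B (n + j + 1) * B * (B⁻¹ + Sdiag B (n + j)) * B * Sig B (n + j + 1)

open scoped Matrix.Norms.L2Operator RealInnerProductSpace

lemma specNorm_eq_norm {p : ℕ} (M : Matrix (Fin p) (Fin p) ℝ) : specNorm M = ‖M‖ := rfl

namespace Matrix

variable {n : Type*} [Fintype n] [DecidableEq n]

lemma PosDef.exists_pos_posSemidef_sub_smul_one [Nonempty n] {B : Matrix n n ℝ} (hB : B.PosDef) :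
    ∃ r : ℝ, 0 < r ∧ (B - r • 1).PosSemidef := by
  open scoped MatrixOrder in
  obtain ⟨r, hr, hrB⟩ := (CFC.exists_pos_algebraMap_le_iff hB.isHermitian).2 fun x hx => by
    obtain ⟨i, rfl⟩ := hB.isHermitian.spectrum_real_eq_range_eigenvalues ▸ hx
    exact hB.eigenvalues_pos i
  exact ⟨r, hr, by rwa [Algebra.algebraMap_eq_smul_one, le_iff] at hrB⟩

lemma l2_opNorm_inv_le_of_posSemidef_sub_smul_one {A : Matrix n n ℝ} {c : ℝ} (hc : 0 < c)
    (hA : (A - c • 1).PosSemidef) : ‖A⁻¹‖ ≤ c⁻¹ := by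
  have hunit : IsUnit A := by
    have : (A - c • 1 + c • 1).PosDef := PosDef.posSemidef_add hA (PosDef.one.smul hc)
    simpa using this.isUnit
  rw [cstar_norm_def]
  refine ContinuousLinearMap.opNorm_le_bound _ (by positivity) fun y => ?_
  set x := toEuclideanCLM (𝕜 := ℝ) A⁻¹ y
  have hAx : toEuclideanCLM (𝕜 := ℝ) A x = y := by
    rw [← mul_apply_eq_comp, ← map_mul, mul_nonsing_inv _ ((isUnit_iff_isUnit_det A).1 hunit),
      map_one, one_apply_eq_self]
  have hcoer : c * ‖x‖ ^ 2 ≤ ⟪x, y⟫ := by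
    have := hA.dotProduct_mulVec_nonneg x.ofLp
    simp only [star_trivial, sub_mulVec, dotProduct_sub, smul_mulVec, one_mulVec, dotProduct_smul,
      smul_eq_mul, sub_nonneg] at this
    rwa [← hAx, inner_toEuclideanCLM, ← real_inner_self_eq_norm_sq,
      EuclideanSpace.inner_eq_star_dotProduct, star_trivial, dotProduct_comm]
  have hcs := real_inner_le_norm x y
  rw [← div_eq_inv_mul, le_div_iff₀' hc]
  nlinarith [norm_nonneg x, norm_nonneg y]

end Matrix

lemma Antitone.hasSum_sub_succ {f : ℕ → ℝ} (hf : Antitone f) (hf0 : Tendsto f atTop (nhds 0)) :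
    HasSum (fun i => f i - f (i + 1)) (f 0) := by
  rw [hasSum_iff_tendsto_nat_of_nonneg fun i => sub_nonneg.2 (hf i.le_succ)]
  simp_rw [Finset.sum_range_sub']
  simpa using hf0.const_sub (f 0)

lemma two_mul_inv_sq_mul_inv_le {a r : ℝ} (ha : 0 < a) (hr : 0 < r) :
    2 * ((1 + (a + 1) * r)⁻¹ ^ 2 * (1 + a * r)⁻¹) ≤ (a⁻¹ ^ 2 - (a + 1)⁻¹ ^ 2) / r ^ 3 := by
  have h1 : r ^ 3 * ((a + 1) ^ 2 * a) ≤ (1 + (a + 1) * r) ^ 2 * (1 + a * r) := by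
    calc r ^ 3 * ((a + 1) ^ 2 * a) = ((a + 1) * r) ^ 2 * (a * r) := by ring
      _ ≤ (1 + (a + 1) * r) ^ 2 * (1 + a * r) := by gcongr <;> linarith
  have h2 : 2 / ((a + 1) ^ 2 * a) ≤ a⁻¹ ^ 2 - (a + 1)⁻¹ ^ 2 := by
    rw [div_le_iff₀ (by positivity)]
    field_simp
    nlinarith
  calc 2 * ((1 + (a + 1) * r)⁻¹ ^ 2 * (1 + a * r)⁻¹)
      = 2 / ((1 + (a + 1) * r) ^ 2 * (1 + a * r)) := by field_simp
    _ ≤ 2 / (r ^ 3 * ((a + 1) ^ 2 * a)) := by gcongr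
    _ = 2 / ((a + 1) ^ 2 * a) / r ^ 3 := by field_simp
    _ ≤ (a⁻¹ ^ 2 - (a + 1)⁻¹ ^ 2) / r ^ 3 := by gcongr

lemma norm_mul₅_le {α : Type*} [NonUnitalSeminormedRing α] (a b c d e : α) :
    ‖a * b * c * d * e‖ ≤ ‖a‖ * ‖b‖ * ‖c‖ * ‖d‖ * ‖e‖ := by
  grw [norm_mul_le, norm_mul_le, norm_mul_le, norm_mul_le]

section Covariance

variable {p : ℕ} {B : Matrix (Fin p) (Fin p) ℝ}

lemma posDef_one_add_smul (hB : B.PosSemidef) (k : ℕ) : (1 + (k : ℝ) • B).PosDef :=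
  PosDef.one.add_posSemidef (hB.smul k.cast_nonneg)

lemma sig_sub_sig_succ (hB : B.PosSemidef) (k : ℕ) :
    Sig B k - Sig B (k + 1) = Sig B k * B * Sig B (k + 1) := by
  rw [Sig, Sig, inv_sub_inv (iff_of_true (posDef_one_add_smul hB k).isUnit
    (posDef_one_add_smul hB (k + 1)).isUnit)]
  congr 2
  push_cast
  module

noncomputable def mnjRemainder (B : Matrix (Fin p) (Fin p) ℝ) (k : ℕ) :
    Matrix (Fin p) (Fin p) ℝ :=
  Sig B (k + 1) * B * Sdiag B k * B * Sig B (k + 1) -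
    Sig B k * B * Sig B (k + 1) * B * Sig B (k + 1)

lemma mnj_eq_sig_sub_sig_add_mnjRemainder (hB : B.PosDef) (n j : ℕ) :
    Mnj B n j = Sig B (n + j) - Sig B (n + j + 1) + mnjRemainder B (n + j) := by
  set S := Sig B (n + j)
  set S' := Sig B (n + j + 1)
  have hBB : B * B⁻¹ = 1 := mul_nonsing_inv B ((isUnit_iff_isUnit_det B).1 hB.isUnit)
  have hres : S - S' = S * B * S' := sig_sub_sig_succ hB.posSemidef (n + j)
  have hSBS' : S * B * S' * B * S' = S - S' - S' * B * S' := by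
    rw [← hres, sub_mul, sub_mul, hres]
  calc Mnj B n j = S' * (B * B⁻¹) * B * S' + S' * B * Sdiag B (n + j) * B * S' := by
        rw [Mnj]; noncomm_ring
    _ = _ := by rw [hBB, mnjRemainder, hSBS']; noncomm_ring

lemma sum_range_mnj (hB : B.PosDef) (n N : ℕ) :
    ∑ j ∈ Finset.range N, Mnj B n j =
      Sig B n - Sig B (n + N) + ∑ j ∈ Finset.range N, mnjRemainder B (n + j) := by
  simp_rw [mnj_eq_sig_sub_sig_add_mnjRemainder hB, Finset.sum_add_distrib, add_assoc,
    Finset.sum_range_sub' (fun j => Sig B (n + j)), add_zero]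

variable {r : ℝ}

lemma norm_sig_le (hr : 0 ≤ r) (hBr : (B - r • 1).PosSemidef) (k : ℕ) :
    ‖Sig B k‖ ≤ (1 + k * r)⁻¹ := by
  refine l2_opNorm_inv_le_of_posSemidef_sub_smul_one (by positivity) ?_
  convert hBr.smul (Nat.cast_nonneg' (α := ℝ) k) using 1
  module

lemma norm_sdiag_le (hr : 0 ≤ r) (hBr : (B - r • 1).PosSemidef) (k : ℕ) :
    ‖Sdiag B k‖ ≤ (1 + k * r)⁻¹ := by
  rw [Sdiag, l2_opNorm_diagonal]
  refine (pi_norm_le_iff_of_nonneg (by positivity)).2 fun j => ?_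
  have hrB : r ≤ B j j := by simpa [sub_nonneg] using hBr.diag_nonneg (i := j)
  have hkB : 0 ≤ (k : ℝ) * B j j := mul_nonneg k.cast_nonneg (hr.trans hrB)
  rw [Real.norm_of_nonneg (by positivity)]
  gcongr

lemma norm_mnjRemainder_le (hr : 0 ≤ r) (hBr : (B - r • 1).PosSemidef) (k : ℕ) :
    ‖mnjRemainder B k‖ ≤ 2 * ‖B‖ ^ 2 * ((1 + (k + 1) * r)⁻¹ ^ 2 * (1 + k * r)⁻¹) := by
  have hS := norm_sig_le hr hBr k
  have hS' : ‖Sig B (k + 1)‖ ≤ (1 + (k + 1) * r)⁻¹ := by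
    exact_mod_cast norm_sig_le hr hBr (k + 1)
  have hD := norm_sdiag_le hr hBr k
  calc ‖mnjRemainder B k‖
      ≤ ‖Sig B (k + 1)‖ * ‖B‖ * ‖Sdiag B k‖ * ‖B‖ * ‖Sig B (k + 1)‖
        + ‖Sig B k‖ * ‖B‖ * ‖Sig B (k + 1)‖ * ‖B‖ * ‖Sig B (k + 1)‖ :=
        (norm_sub_le _ _).trans (add_le_add (norm_mul₅_le ..) (norm_mul₅_le ..))
    _ ≤ (1 + (k + 1) * r)⁻¹ * ‖B‖ * (1 + k * r)⁻¹ * ‖B‖ * (1 + (k + 1) * r)⁻¹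
        + (1 + k * r)⁻¹ * ‖B‖ * (1 + (k + 1) * r)⁻¹ * ‖B‖ * (1 + (k + 1) * r)⁻¹ := by
        gcongr
    _ = _ := by ring

lemma tendsto_sig_atTop (hr : 0 < r) (hBr : (B - r • 1).PosSemidef) :
    Tendsto (Sig B) atTop (nhds 0) := by
  rw [tendsto_zero_iff_norm_tendsto_zero]
  refine squeeze_zero (fun _ => norm_nonneg _) (norm_sig_le hr.le hBr) ?_
  exact (tendsto_atTop_add_const_left _ 1
    (tendsto_natCast_atTop_atTop.atTop_mul_const hr)).inv_tendsto_atTop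

lemma norm_mnjRemainder_le_sub (hr : 0 < r) (hBr : (B - r • 1).PosSemidef) {k : ℕ}
    (hk : 1 ≤ k) :
    ‖mnjRemainder B k‖ ≤ ‖B‖ ^ 2 / r ^ 3 * ((k : ℝ)⁻¹ ^ 2 - ((k + 1 : ℕ) : ℝ)⁻¹ ^ 2) := by
  have hk' : (0 : ℝ) < k := by exact_mod_cast hk
  calc ‖mnjRemainder B k‖
      ≤ ‖B‖ ^ 2 * (2 * ((1 + (k + 1) * r)⁻¹ ^ 2 * (1 + k * r)⁻¹)) := by
        linarith [norm_mnjRemainder_le hr.le hBr k]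
    _ ≤ ‖B‖ ^ 2 * (((k : ℝ)⁻¹ ^ 2 - ((k : ℝ) + 1)⁻¹ ^ 2) / r ^ 3) := by
        gcongr
        exact two_mul_inv_sq_mul_inv_le hk' hr
    _ = _ := by push_cast; ring

lemma summable_mnjRemainder_and_norm_tsum_le (hr : 0 < r) (hBr : (B - r • 1).PosSemidef) {n : ℕ}
    (hn : 1 ≤ n) :
    Summable (fun j => mnjRemainder B (n + j)) ∧
      ‖∑' j, mnjRemainder B (n + j)‖ ≤ ‖B‖ ^ 2 / r ^ 3 / (n : ℝ) ^ 2 := by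
  set f : ℕ → ℝ := fun j => ((n + j : ℕ) : ℝ)⁻¹ ^ 2
  have hf : Antitone f := fun a b hab => by
    have : (0 : ℝ) < ((n + a : ℕ) : ℝ) := by exact_mod_cast (by omega : 0 < n + a)
    simp only [f]
    gcongr
  have hf0 : Tendsto f atTop (nhds 0) := by
    simpa [f, add_comm] using
      ((tendsto_inv_atTop_zero.comp (tendsto_natCast_atTop_atTop (R := ℝ))).comp
        (tendsto_add_atTop_nat n)).pow 2
  have hg := (hf.hasSum_sub_succ hf0).mul_left (‖B‖ ^ 2 / r ^ 3)
  have hbound (j : ℕ) : ‖mnjRemainder B (n + j)‖ ≤ ‖B‖ ^ 2 / r ^ 3 * (f j - f (j + 1)) :=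
    norm_mnjRemainder_le_sub hr hBr (by omega)
  refine ⟨.of_norm_bounded hg.summable hbound, (tsum_of_norm_bounded hg hbound).trans_eq ?_⟩
  simp [f, div_eq_mul_inv]

end Covariance

/-- Key covariance decomposition in the proof of Theorem 2: there is a constant `C > 0`,
depending only on `B`, such that for every `n ≥ 1` the series `Σ_{j≥1} M_{n,j}` converges in
spectral norm and `‖Σ_{j≥1} M_{n,j} - Σ_n‖ ≤ C / n²`. -/
theorem stmt_5 (p : ℕ) (hp : 1 ≤ p) (B : Matrix (Fin p) (Fin p) ℝ) (hB : B.PosDef) :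
    ∃ C : ℝ, 0 < C ∧ ∀ n : ℕ, 1 ≤ n →
      ∃ V : Matrix (Fin p) (Fin p) ℝ,
        Tendsto (fun N : ℕ => specNorm ((∑ j ∈ Finset.range N, Mnj B n j) - V)) atTop (nhds 0) ∧
          specNorm (V - Sig B n) ≤ C / (n : ℝ) ^ 2 := by
  have : NeZero p := ⟨by omega⟩
  obtain ⟨r, hr, hBr⟩ := hB.exists_pos_posSemidef_sub_smul_one
  have hB0 : 0 < ‖B‖ := norm_pos_iff.2 hB.isUnit.ne_zero
  refine ⟨‖B‖ ^ 2 / r ^ 3, by positivity, fun n hn => ?_⟩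
  obtain ⟨hsum, hle⟩ := summable_mnjRemainder_and_norm_tsum_le hr hBr hn
  simp only [specNorm_eq_norm]
  refine ⟨Sig B n + ∑' j, mnjRemainder B (n + j), ?_, by rwa [add_sub_cancel_left]⟩
  have hlim : Tendsto (fun N => ∑ j ∈ Finset.range N, Mnj B n j) atTop
      (nhds (Sig B n - 0 + ∑' j, mnjRemainder B (n + j))) := by
    have hSig : Tendsto (fun N => Sig B (n + N)) atTop (nhds 0) := by
      simpa only [add_comm] using (tendsto_add_atTop_iff_nat n).2 (tendsto_sig_atTop hr hBr)
    simp_rw [sum_range_mnj hB]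
    exact (hSig.const_sub _).add hsum.hasSum.tendsto_sum_nat
  rw [sub_zero] at hlim
  exact tendsto_iff_norm_sub_tendsto_zero.1 hlim
end

section
/- For every integer k ≥ 1, ‖ Σ_k B S_{k−1} B Σ_k ‖ ≤ 1 / ( k² (1 + (k−1) λ_min(B)) ). -/
open MeasureTheory Matrix Filter

/-! Since `Σ_k` commutes with `B`, the matrix is `(Σ_k B) S_{k-1} (Σ_k B)`. In an eigenbasis
of `B`, `Σ_k B` is diagonal with entries `λ / (1 + kλ) ≤ 1/k`. Since `B - λ_min(B) • 1` is
positive semidefinite, every diagonal entry of `B` is at least `λ_min(B)`, which gives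
`‖S_{k-1}‖ ≤ 1 / (1 + (k-1) λ_min(B))`. -/

theorem CStarRing.norm_unitary_conj {E : Type*} [NormedRing E] [StarRing E] [CStarRing E]
    {U : E} (hU : U ∈ unitary E) (A : E) : ‖U * A * star U‖ = ‖A‖ := by
  rw [CStarRing.norm_mul_mem_unitary _ (Unitary.star_mem hU), CStarRing.norm_mem_unitary_mul _ hU]

namespace Matrix

section CommRing

variable {n α : Type*} [Fintype n] [DecidableEq n] [CommRing α]

theorem commute_nonsing_inv_left {A B : Matrix n n α} (h : Commute A B) : Commute A⁻¹ B := by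
  by_cases hA : IsUnit A.det
  · calc A⁻¹ * B = A⁻¹ * (B * A) * A⁻¹ := by
          rw [Matrix.mul_assoc, Matrix.mul_assoc, mul_nonsing_inv A hA, Matrix.mul_one]
      _ = B * A⁻¹ := by
          rw [← h.eq, ← Matrix.mul_assoc, nonsing_inv_mul A hA, Matrix.one_mul]
  · simp [nonsing_inv_apply_not_isUnit A hA]

theorem inv_one_add_smul_diagonal_mul {K : Type*} [Field K] {c : K} {d : n → K}
    (hd : ∀ i, 1 + c * d i ≠ 0) :
    (1 + c • diagonal d)⁻¹ * diagonal d = diagonal fun i => d i / (1 + c * d i) := by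
  have hdiag : 1 + c • diagonal d = diagonal fun i => 1 + c * d i := by
    rw [← diagonal_one, ← diagonal_smul, diagonal_add]
    rfl
  have hinv : (diagonal fun i => 1 + c * d i)⁻¹ = diagonal fun i => (1 + c * d i)⁻¹ :=
    inv_eq_left_inv <| by
      rw [diagonal_mul_diagonal, ← diagonal_one]
      exact congrArg diagonal (funext fun i => inv_mul_cancel₀ (hd i))
  rw [hdiag, hinv, diagonal_mul_diagonal]
  simp only [div_eq_inv_mul]

variable [StarRing α] {U : Matrix n n α}

theorem nonsing_inv_unitary_conj (hU : U ∈ unitary (Matrix n n α)) (A : Matrix n n α) :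
    (U * A * star U)⁻¹ = U * A⁻¹ * star U := by
  rw [Matrix.mul_inv_rev, Matrix.mul_inv_rev, inv_eq_left_inv (Unitary.mul_star_self_of_mem hU),
    inv_eq_left_inv (Unitary.star_mul_self_of_mem hU), Matrix.mul_assoc]

theorem inv_one_add_smul_unitary_conj_mul (hU : U ∈ unitary (Matrix n n α)) (c : α)
    (A : Matrix n n α) :
    (1 + c • (U * A * star U))⁻¹ * (U * A * star U) =
      U * ((1 + c • A)⁻¹ * A) * star U := by
  have hconj : 1 + c • (U * A * star U) = U * (1 + c • A) * star U := by
    rw [Matrix.mul_add, Matrix.add_mul, Matrix.mul_one, Unitary.mul_star_self_of_mem hU,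
      Matrix.mul_smul, Matrix.smul_mul]
  rw [hconj, nonsing_inv_unitary_conj hU]
  calc U * (1 + c • A)⁻¹ * star U * (U * A * star U)
      = U * ((1 + c • A)⁻¹ * (star U * U) * A) * star U := by simp only [Matrix.mul_assoc]
    _ = U * ((1 + c • A)⁻¹ * A) * star U := by
      rw [Unitary.star_mul_self_of_mem hU, Matrix.mul_one]

end CommRing

section RCLike

open scoped Matrix.Norms.L2Operator MatrixOrder ComplexOrder

variable {𝕜 n : Type*} [RCLike 𝕜] [Fintype n] [DecidableEq n]

theorem IsHermitian.iInf_eigenvalues_le_re_apply {A : Matrix n n 𝕜} (hA : A.IsHermitian)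
    (j : n) : ⨅ i, hA.eigenvalues i ≤ RCLike.re (A j j) := by
  have hle : algebraMap ℝ (Matrix n n 𝕜) (⨅ i, hA.eigenvalues i) ≤ A := by
    rw [algebraMap_le_iff_le_spectrum hA.isSelfAdjoint, hA.spectrum_real_eq_range_eigenvalues]
    rintro _ ⟨i, rfl⟩
    exact ciInf_le (Finite.bddBelow_range _) i
  have hdiag := RCLike.nonneg_iff.mp ((Matrix.le_iff.mp hle).diag_nonneg (i := j))
  simpa [algebraMap_eq_diagonal, sub_nonneg] using hdiag.1

theorem PosSemidef.norm_inv_one_add_smul_mul_le {B : Matrix n n 𝕜} (hB : B.PosSemidef)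
    {t : ℝ} (ht : 0 < t) : ‖(1 + t • B)⁻¹ * B‖ ≤ t⁻¹ := by
  set ev := hB.isHermitian.eigenvalues
  have hpos : ∀ i, 0 < 1 + t * ev i := fun i => by
    have := hB.eigenvalues_nonneg i
    positivity
  have hU := hB.isHermitian.eigenvectorUnitary.2
  have hspec := hB.isHermitian.spectral_theorem
  rw [Unitary.conjStarAlgAut_apply] at hspec
  rw [RCLike.real_smul_eq_coe_smul (K := 𝕜), hspec, inv_one_add_smul_unitary_conj_mul hU,
    inv_one_add_smul_diagonal_mul fun i => by rw [Function.comp_apply]; exact_mod_cast (hpos i).ne',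
    CStarRing.norm_unitary_conj hU, l2_opNorm_diagonal]
  refine (pi_norm_le_iff_of_nonneg (by positivity)).mpr fun i => ?_
  have hentry : (RCLike.ofReal ∘ ev) i / (1 + (t : 𝕜) * (RCLike.ofReal ∘ ev) i) =
      ((ev i / (1 + t * ev i) : ℝ) : 𝕜) := by
    simp
  have := hB.eigenvalues_nonneg i
  rw [hentry, RCLike.norm_ofReal, abs_of_nonneg (by positivity), div_le_iff₀ (hpos i), mul_add,
    inv_mul_cancel_left₀ ht.ne']
  linarith [inv_pos.mpr ht]

end RCLike

end Matrix

open scoped Matrix.Norms.L2Operator in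
theorem norm_Sdiag_le {p : ℕ} {B : Matrix (Fin p) (Fin p) ℝ} (hB : B.PosSemidef) (k : ℕ) :
    ‖Sdiag B k‖ ≤ (1 + k * ⨅ i, hB.isHermitian.eigenvalues i)⁻¹ := by
  have hmin : 0 ≤ ⨅ i, hB.isHermitian.eigenvalues i := Real.iInf_nonneg hB.eigenvalues_nonneg
  rw [Sdiag, l2_opNorm_diagonal]
  refine (pi_norm_le_iff_of_nonneg (by positivity)).mpr fun j => ?_
  have hj : ⨅ i, hB.isHermitian.eigenvalues i ≤ B j j :=
    hB.isHermitian.iInf_eigenvalues_le_re_apply j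
  have hBjj : 0 ≤ B j j := hmin.trans hj
  rw [Real.norm_of_nonneg (by positivity)]
  gcongr

open scoped Matrix.Norms.L2Operator in
theorem stmt_9_general (p : ℕ) (B : Matrix (Fin p) (Fin p) ℝ) (hB : B.PosDef)
    (k : ℕ) (hk : 1 ≤ k) :
    specNorm (Sig B k * B * Sdiag B (k - 1) * B * Sig B k) ≤
      1 / ((k : ℝ) ^ 2 * (1 + ((k : ℝ) - 1) * ⨅ i, hB.isHermitian.eigenvalues i)) := by
  have hk' : (0 : ℝ) < k := by exact_mod_cast hk
  set m := ⨅ i, hB.isHermitian.eigenvalues i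
  have hSigB : ‖Sig B k * B‖ ≤ (k : ℝ)⁻¹ :=
    hB.posSemidef.norm_inv_one_add_smul_mul_le hk'
  have hcomm : B * Sig B k = Sig B k * B := (commute_nonsing_inv_left
    ((Commute.one_left B).add_left ((Commute.refl B).smul_left _))).eq.symm
  have hS : ‖Sdiag B (k - 1)‖ ≤ (1 + ((k : ℝ) - 1) * m)⁻¹ := by
    simpa [Nat.cast_sub hk] using norm_Sdiag_le hB.posSemidef (k - 1)
  calc specNorm (Sig B k * B * Sdiag B (k - 1) * B * Sig B k)
      = ‖Sig B k * B * Sdiag B (k - 1) * (Sig B k * B)‖ := by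
        rw [specNorm, l2_opNorm_toEuclideanCLM, ← hcomm]; simp only [Matrix.mul_assoc]
    _ ≤ ‖Sig B k * B‖ * ‖Sdiag B (k - 1)‖ * ‖Sig B k * B‖ := norm_mul₃_le
    _ ≤ (k : ℝ)⁻¹ * (1 + ((k : ℝ) - 1) * m)⁻¹ * (k : ℝ)⁻¹ := by
        gcongr
        exact mul_nonneg (by positivity) ((norm_nonneg _).trans hS)
    _ = _ := by field_simp

/-- For every `k ≥ 1`, `‖Σ_k B S_{k-1} B Σ_k‖ ≤ 1/(k² (1 + (k-1) λ_min(B)))` in spectral norm. -/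
theorem stmt_9 (p : ℕ) (hp : 1 ≤ p) (B : Matrix (Fin p) (Fin p) ℝ) (hB : B.PosDef)
    (k : ℕ) (hk : 1 ≤ k) :
    specNorm (Sig B k * B * Sdiag B (k - 1) * B * Sig B k) ≤
      1 / ((k : ℝ) ^ 2 * (1 + ((k : ℝ) - 1) * ⨅ i, hB.isHermitian.eigenvalues i)) :=
  stmt_9_general p B hB k hk
end

section
/- Fix m ∈ ℝ^p and an integer k ≥ 1, let Ỹ be an ℝ^p-valued random vector distributed as N(m, B⁻¹ + S_k), and define the increment Δ := Σ_{k+1} B (Ỹ − m). Then there exists a constant C > 0, depending only on B and p, such that E[‖Δ‖₂⁴] ≤ C / k⁴; in particular √(E[‖Δ‖₂⁴]) = O(k⁻²). -/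
open MeasureTheory Matrix Filter

/-!
Write `z = Ỹ - m`. Since `I + tB` commutes with `B`, the vector `(I + tB)⁻¹ B z` equals `B u` with
`z = u + t B u`, and expanding `‖z‖²` with `B ⪰ 0` gives `t ‖B u‖ ≤ ‖z‖`; hence `‖Δ‖⁴ ≤ ‖z‖⁴ / k⁴`.
Because `0 ⪯ S_k ⪯ I`, the covariances `B⁻¹ + S_k` lie between two fixed multiples of the identity,
so their determinants and the quadratic forms of their inverses are bounded below uniformly in `k`.
Thus every density `N(m, B⁻¹ + S_k)` is dominated by one Gaussian profile `D exp(-2b‖z‖²)`,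
against which `‖z‖⁴` has a finite integral.
-/

namespace Matrix

variable {ι : Type*} [Fintype ι]

lemma dotProduct_self_eq_sum_sq (z : ι → ℝ) : z ⬝ᵥ z = ∑ i, z i ^ 2 := by
  simp [dotProduct, sq]

lemma dotProduct_self_nonneg (z : ι → ℝ) : 0 ≤ z ⬝ᵥ z := by
  simpa using dotProduct_star_self_nonneg z

lemma exists_dotProduct_mulVec_le (M : Matrix ι ι ℝ) :
    ∃ c > 0, ∀ z : ι → ℝ, z ⬝ᵥ (M *ᵥ z) ≤ c * (z ⬝ᵥ z) := by
  refine ⟨∑ i, ∑ j, |M i j| + 1, by positivity, fun z => ?_⟩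
  have hcoord : ∀ i, z i ^ 2 ≤ z ⬝ᵥ z := fun i => by
    rw [dotProduct_self_eq_sum_sq]
    exact Finset.single_le_sum (fun j _ => sq_nonneg (z j)) (Finset.mem_univ i)
  calc z ⬝ᵥ (M *ᵥ z) = ∑ i, ∑ j, M i j * (z i * z j) := by
        simp only [dotProduct, mulVec, Finset.mul_sum]
        exact Finset.sum_congr rfl fun i _ => Finset.sum_congr rfl fun j _ => by ring
    _ ≤ ∑ i, ∑ j, |M i j| * (z ⬝ᵥ z) := by
        refine Finset.sum_le_sum fun i _ => Finset.sum_le_sum fun j _ => ?_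
        have hij : |z i * z j| ≤ z ⬝ᵥ z := by
          nlinarith [hcoord i, hcoord j, sq_nonneg (|z i| - |z j|), abs_mul (z i) (z j),
            sq_abs (z i), sq_abs (z j)]
        calc M i j * (z i * z j) ≤ |M i j * (z i * z j)| := le_abs_self _
          _ = |M i j| * |z i * z j| := abs_mul _ _
          _ ≤ |M i j| * (z ⬝ᵥ z) := by gcongr
    _ ≤ (∑ i, ∑ j, |M i j| + 1) * (z ⬝ᵥ z) := by
        simp only [← Finset.sum_mul]; nlinarith [dotProduct_self_nonneg z]

variable [DecidableEq ι]

lemma PosSemidef.dotProduct_mulVec_sq_le {M : Matrix ι ι ℝ} (hM : M.PosSemidef) (x y : ι → ℝ) :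
    (x ⬝ᵥ (M *ᵥ y)) ^ 2 ≤ (x ⬝ᵥ (M *ᵥ x)) * (y ⬝ᵥ (M *ᵥ y)) := by
  have hsymm : LinearMap.IsSymm M.toBilin' := LinearMap.BilinForm.isSymm_iff.mp <|
    isSymm_toBilin'_iff_isSymm.mpr <| by
      rw [IsSymm, ← conjTranspose_eq_transpose_of_trivial]; exact hM.isHermitian
  simpa only [toBilin'_apply'] using M.toBilin'.apply_sq_le_of_symm
    (fun z => by simpa only [toBilin'_apply', star_trivial] using hM.dotProduct_mulVec_nonneg z)
    hsymm x y

lemma PosDef.div_le_dotProduct_inv_mulVec {M : Matrix ι ι ℝ} (hM : M.PosDef) {c : ℝ}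
    (hc : 0 < c) (hMc : ∀ z : ι → ℝ, z ⬝ᵥ (M *ᵥ z) ≤ c * (z ⬝ᵥ z)) (z : ι → ℝ) :
    (z ⬝ᵥ z) / c ≤ z ⬝ᵥ (M⁻¹ *ᵥ z) := by
  set w := M⁻¹ *ᵥ z
  have hMw : M *ᵥ w = z := by
    rw [mulVec_mulVec, mul_nonsing_inv _ hM.det_pos.ne'.isUnit, one_mulVec]
  have hw : w ⬝ᵥ z = z ⬝ᵥ w := dotProduct_comm _ _
  -- Cauchy–Schwarz for the form of `M` at `z` and `M⁻¹ z`: `‖z‖⁴ ≤ (zᵀ M z) (zᵀ M⁻¹ z)`.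
  have hcs := hM.posSemidef.dotProduct_mulVec_sq_le z w
  rw [hMw, hw] at hcs
  have hq : 0 ≤ z ⬝ᵥ w := by
    simpa using hM.inv.posSemidef.dotProduct_mulVec_nonneg z
  rw [div_le_iff₀ hc]
  rcases (dotProduct_self_nonneg z).eq_or_lt with h0 | h0
  · rw [← h0]; exact mul_nonneg hq hc.le
  · nlinarith [hMc z]

lemma PosDef.exists_mul_le_dotProduct_mulVec {M : Matrix ι ι ℝ} (hM : M.PosDef) :
    ∃ c > 0, ∀ z : ι → ℝ, c * (z ⬝ᵥ z) ≤ z ⬝ᵥ (M *ᵥ z) := by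
  obtain ⟨c, hc, hMc⟩ := exists_dotProduct_mulVec_le M⁻¹
  refine ⟨c⁻¹, inv_pos.mpr hc, fun z => ?_⟩
  simpa only [inv_mul_eq_div, nonsing_inv_nonsing_inv _ hM.det_pos.ne'.isUnit] using
    hM.inv.div_le_dotProduct_inv_mulVec hc hMc z

lemma IsHermitian.pow_card_le_det {M : Matrix ι ι ℝ} (hM : M.IsHermitian) {c : ℝ} (hc : 0 ≤ c)
    (hMc : ∀ z : ι → ℝ, c * (z ⬝ᵥ z) ≤ z ⬝ᵥ (M *ᵥ z)) : c ^ Fintype.card ι ≤ M.det := by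
  rw [hM.det_eq_prod_eigenvalues, ← Finset.card_univ, ← Finset.prod_const]
  refine Finset.prod_le_prod (fun _ _ => hc) fun i _ => ?_
  set v := hM.eigenvectorBasis i
  have hv : (v : ι → ℝ) ⬝ᵥ v = 1 := by
    have h := real_inner_self_eq_norm_sq v
    rw [hM.eigenvectorBasis.orthonormal.1 i, EuclideanSpace.inner_eq_star_dotProduct] at h
    simpa using h
  have heig : hM.eigenvalues i = (v : ι → ℝ) ⬝ᵥ (M *ᵥ v) := by simpa using hM.eigenvalues_eq i
  simpa [heig, hv] using hMc v

lemma PosSemidef.sq_mul_dotProduct_self_inv_one_add_smul_mulVec_le {B : Matrix ι ι ℝ} (hB : B.PosSemidef) {t : ℝ}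
    (ht : 0 ≤ t) (z : ι → ℝ) :
    t ^ 2 * (((1 + t • B)⁻¹ *ᵥ (B *ᵥ z)) ⬝ᵥ ((1 + t • B)⁻¹ *ᵥ (B *ᵥ z))) ≤ z ⬝ᵥ z := by
  set M := 1 + t • B
  have hM : IsUnit M.det := (PosDef.one.add_posSemidef (hB.smul ht)).det_pos.ne'.isUnit
  set u := M⁻¹ *ᵥ z
  have hMu : M *ᵥ u = z := by rw [mulVec_mulVec, mul_nonsing_inv _ hM, one_mulVec]
  have hz : z = u + t • (B *ᵥ u) := by
    rw [← hMu, add_mulVec, one_mulVec, smul_mulVec]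
  have hBM : B * M = M * B := ((Commute.one_right B).add_right ((Commute.refl B).smul_right t)).eq
  have hw : M⁻¹ *ᵥ (B *ᵥ z) = B *ᵥ u := by
    rw [← hMu, mulVec_mulVec, mulVec_mulVec, Matrix.mul_assoc, hBM, ← Matrix.mul_assoc,
      nonsing_inv_mul _ hM, Matrix.one_mul]
  have hBu : 0 ≤ u ⬝ᵥ (B *ᵥ u) := by simpa using hB.dotProduct_mulVec_nonneg u
  rw [hw]
  conv_rhs => rw [hz]
  simp only [add_dotProduct, dotProduct_add, smul_dotProduct, dotProduct_smul, smul_eq_mul,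
    dotProduct_comm (B *ᵥ u) u]
  nlinarith [mul_nonneg ht hBu, dotProduct_self_nonneg u]

end Matrix

open Real

lemma sq_mul_exp_neg_two_mul_le {b s : ℝ} (hb : 0 < b) (hs : 0 ≤ s) :
    s ^ 2 * exp (-(2 * b) * s) ≤ 4 / b ^ 2 * exp (-b * s) := by
  have hlin : b * s / 2 ≤ exp (b * s / 2) := by linarith [add_one_le_exp (b * s / 2)]
  have hsq : (b * s / 2) ^ 2 ≤ exp (b * s) := by
    calc (b * s / 2) ^ 2 ≤ exp (b * s / 2) ^ 2 := by gcongr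
      _ = exp (b * s) := by rw [← exp_nat_mul]; ring_nf
  have hsplit : exp (-(2 * b) * s) = exp (-b * s) * exp (-b * s) := by rw [← exp_add]; ring_nf
  rw [hsplit, div_mul_eq_mul_div, le_div_iff₀ (by positivity)]
  have hbs : exp (b * s) * exp (-b * s) = 1 := by rw [← exp_add]; simp
  nlinarith [exp_pos (-b * s), mul_le_mul_of_nonneg_right hsq (exp_pos (-b * s)).le]

section GaussianIntegral

variable {ι : Type*} [Fintype ι]

lemma exp_neg_mul_dotProduct_self_eq_prod (b : ℝ) (z : ι → ℝ) :
    exp (-b * (z ⬝ᵥ z)) = ∏ i, exp (-b * z i ^ 2) := by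
  rw [Matrix.dotProduct_self_eq_sum_sq, Finset.mul_sum, exp_sum]

lemma integrable_exp_neg_mul_dotProduct_self {b : ℝ} (hb : 0 < b) :
    Integrable fun z : ι → ℝ => exp (-b * (z ⬝ᵥ z)) := by
  simp only [exp_neg_mul_dotProduct_self_eq_prod]
  exact Integrable.fintype_prod (f := fun _ (t : ℝ) => exp (-b * t ^ 2))
    fun _ => integrable_exp_neg_mul_sq hb

lemma integral_exp_neg_mul_dotProduct_self (b : ℝ) :
    ∫ z : ι → ℝ, exp (-b * (z ⬝ᵥ z)) = √(π / b) ^ Fintype.card ι := by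
  simp only [exp_neg_mul_dotProduct_self_eq_prod]
  rw [integral_fintype_prod_volume_eq_pow (fun t : ℝ => exp (-b * t ^ 2)), integral_gaussian]

lemma integral_mul_le_of_le_sq_dotProduct_of_le_exp {F g : (ι → ℝ) → ℝ} {m : ι → ℝ}
    {A D b : ℝ} (hA : 0 ≤ A) (hD : 0 ≤ D) (hb : 0 < b) (hF₀ : ∀ y, 0 ≤ F y)
    (hF : ∀ y, F y ≤ A * ((y - m) ⬝ᵥ (y - m)) ^ 2) (hg₀ : ∀ y, 0 ≤ g y)
    (hg : ∀ y, g y ≤ D * exp (-(2 * b) * ((y - m) ⬝ᵥ (y - m)))) :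
    ∫ y, F y * g y ≤ A * D * (4 / b ^ 2) * √(π / b) ^ Fintype.card ι := by
  have hpt : ∀ y, F y * g y ≤ A * D * (4 / b ^ 2) * exp (-b * ((y - m) ⬝ᵥ (y - m))) := by
    intro y
    set s := (y - m) ⬝ᵥ (y - m)
    calc F y * g y ≤ A * s ^ 2 * (D * exp (-(2 * b) * s)) :=
          mul_le_mul (hF y) (hg y) (hg₀ y) ((hF₀ y).trans (hF y))
      _ = A * D * (s ^ 2 * exp (-(2 * b) * s)) := by ring
      _ ≤ A * D * (4 / b ^ 2 * exp (-b * s)) := mul_le_mul_of_nonneg_left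
          (sq_mul_exp_neg_two_mul_le hb (Matrix.dotProduct_self_nonneg _)) (mul_nonneg hA hD)
      _ = _ := by ring
  have hint : Integrable fun y : ι → ℝ => A * D * (4 / b ^ 2) * exp (-b * ((y - m) ⬝ᵥ (y - m))) :=
    ((integrable_exp_neg_mul_dotProduct_self hb).comp_sub_right m).const_mul _
  calc ∫ y, F y * g y ≤ ∫ y, A * D * (4 / b ^ 2) * exp (-b * ((y - m) ⬝ᵥ (y - m))) :=
        integral_mono_of_nonneg (.of_forall fun y => mul_nonneg (hF₀ y) (hg₀ y)) hint
          (.of_forall hpt)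
    _ = A * D * (4 / b ^ 2) * √(π / b) ^ Fintype.card ι := by
        rw [integral_const_mul, integral_sub_right_eq_self
          (fun z : ι → ℝ => exp (-b * (z ⬝ᵥ z))) m, integral_exp_neg_mul_dotProduct_self]

end GaussianIntegral

section GaussianLocationModel

open Matrix

variable {p : ℕ}

lemma gaussDensity_nonneg {C : Matrix (Fin p) (Fin p) ℝ} (hC : C.PosSemidef) (μ y : Fin p → ℝ) :
    0 ≤ gaussDensity μ C y := by
  unfold gaussDensity
  have := hC.det_nonneg
  positivity

lemma gaussDensity_le {C : Matrix (Fin p) (Fin p) ℝ} (hC : C.PosDef) {c₁ c₂ : ℝ} (hc₁ : 0 < c₁)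
    (hc₂ : 0 < c₂) (hlow : ∀ z, c₁ * (z ⬝ᵥ z) ≤ z ⬝ᵥ (C *ᵥ z))
    (hup : ∀ z, z ⬝ᵥ (C *ᵥ z) ≤ c₂ * (z ⬝ᵥ z)) (μ y : Fin p → ℝ) :
    gaussDensity μ C y ≤
      (2 * π) ^ (-(p : ℝ) / 2) * (c₁ ^ p) ^ (-(1 : ℝ) / 2) *
        exp (-(2 * c₂)⁻¹ * ((y - μ) ⬝ᵥ (y - μ))) := by
  have hdet : C.det ^ (-(1 : ℝ) / 2) ≤ (c₁ ^ p) ^ (-(1 : ℝ) / 2) :=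
    Real.rpow_le_rpow_of_nonpos (by positivity)
      (by simpa using hC.isHermitian.pow_card_le_det hc₁.le hlow) (by norm_num)
  have hquad := hC.div_le_dotProduct_inv_mulVec hc₂ hup (y - μ)
  unfold gaussDensity
  gcongr _ * ?_ * exp ?_
  rw [div_eq_inv_mul] at hquad
  rw [mul_inv]
  linarith

lemma posSemidef_Sdiag {B : Matrix (Fin p) (Fin p) ℝ} (hB : B.PosDef) (k : ℕ) :
    (Sdiag B k).PosSemidef :=
  PosSemidef.diagonal fun j => by have := hB.diag_pos (i := j); positivity

lemma dotProduct_Sdiag_mulVec_le {B : Matrix (Fin p) (Fin p) ℝ} (hB : B.PosDef) (k : ℕ)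
    (z : Fin p → ℝ) : z ⬝ᵥ (Sdiag B k *ᵥ z) ≤ z ⬝ᵥ z := by
  simp only [Sdiag, mulVec_diagonal, dotProduct]
  refine Finset.sum_le_sum fun j _ => ?_
  have hd : (1 + (k : ℝ) * B j j)⁻¹ ≤ 1 :=
    inv_le_one_of_one_le₀ (le_add_of_nonneg_right (by have := hB.diag_pos (i := j); positivity))
  nlinarith [mul_self_nonneg (z j)]

lemma exists_gaussDensity_inv_add_Sdiag_le {B : Matrix (Fin p) (Fin p) ℝ} (hB : B.PosDef) :
    ∃ D > 0, ∃ b > 0, ∀ (k : ℕ) (m y : Fin p → ℝ),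
      gaussDensity m (B⁻¹ + Sdiag B k) y ≤ D * exp (-(2 * b) * ((y - m) ⬝ᵥ (y - m))) := by
  obtain ⟨c₁, hc₁, hlow⟩ := hB.inv.exists_mul_le_dotProduct_mulVec
  obtain ⟨c₂, hc₂, hup⟩ := exists_dotProduct_mulVec_le B⁻¹
  refine ⟨(2 * π) ^ (-(p : ℝ) / 2) * (c₁ ^ p) ^ (-(1 : ℝ) / 2), by positivity,
    (4 * (c₂ + 1))⁻¹, by positivity, fun k m y => ?_⟩
  have hS := posSemidef_Sdiag hB k
  refine (gaussDensity_le (hB.inv.add_posSemidef hS) hc₁ (by positivity : 0 < c₂ + 1)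
    (fun z => ?_) (fun z => ?_) m y).trans_eq ?_
  · rw [add_mulVec, dotProduct_add]
    simpa using add_le_add (hlow z) (hS.dotProduct_mulVec_nonneg z)
  · rw [add_mulVec, dotProduct_add, add_mul, one_mul]
    exact add_le_add (hup z) (dotProduct_Sdiag_mulVec_le hB k z)
  · congr 3
    rw [mul_inv, mul_inv]
    ring

lemma pow_four_mul_sq_sum_Sig_succ_mulVec_le {B : Matrix (Fin p) (Fin p) ℝ} (hB : B.PosSemidef)
    (k : ℕ) (z : Fin p → ℝ) :
    (k : ℝ) ^ 4 * (∑ i, (Sig B (k + 1) *ᵥ (B *ᵥ z)) i ^ 2) ^ 2 ≤ (z ⬝ᵥ z) ^ 2 := by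
  set w := Sig B (k + 1) *ᵥ (B *ᵥ z)
  have hw : ((k + 1 : ℕ) : ℝ) ^ 2 * (w ⬝ᵥ w) ≤ z ⬝ᵥ z :=
    hB.sq_mul_dotProduct_self_inv_one_add_smul_mulVec_le (Nat.cast_nonneg _) z
  have hk : (k : ℝ) ^ 2 ≤ ((k + 1 : ℕ) : ℝ) ^ 2 := by push_cast; gcongr; linarith
  have hkw := (mul_le_mul_of_nonneg_right hk (dotProduct_self_nonneg w)).trans hw
  rw [← dotProduct_self_eq_sum_sq]
  calc (k : ℝ) ^ 4 * (w ⬝ᵥ w) ^ 2 = ((k : ℝ) ^ 2 * (w ⬝ᵥ w)) ^ 2 := by ring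
    _ ≤ (z ⬝ᵥ z) ^ 2 := by gcongr; exact mul_nonneg (by positivity) (dotProduct_self_nonneg w)

end GaussianLocationModel

theorem stmt_18_general (p : ℕ) (B : Matrix (Fin p) (Fin p) ℝ) (hB : B.PosDef) :
    ∃ C : ℝ, 0 < C ∧ ∀ k : ℕ, 1 ≤ k → ∀ m : Fin p → ℝ,
      (∫ y : Fin p → ℝ,
          (∑ i, (Sig B (k + 1) *ᵥ (B *ᵥ (y - m))) i ^ 2) ^ 2 *
            gaussDensity m (B⁻¹ + Sdiag B k) y) ≤ C / (k : ℝ) ^ 4 ∧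
      Real.sqrt
          (∫ y : Fin p → ℝ,
            (∑ i, (Sig B (k + 1) *ᵥ (B *ᵥ (y - m))) i ^ 2) ^ 2 *
              gaussDensity m (B⁻¹ + Sdiag B k) y) ≤ Real.sqrt C / (k : ℝ) ^ 2 := by
  obtain ⟨D, hD, b, hb, hdens⟩ := exists_gaussDensity_inv_add_Sdiag_le hB
  set C := D * (4 / b ^ 2) * √(π / b) ^ p
  refine ⟨C, by positivity, fun k hk m => ?_⟩
  have hk4 : (0 : ℝ) < (k : ℝ) ^ 4 := pow_pos (Nat.cast_pos.mpr hk) 4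
  have hΔ (y : Fin p → ℝ) :
      (∑ i, (Sig B (k + 1) *ᵥ (B *ᵥ (y - m))) i ^ 2) ^ 2 ≤ ((k : ℝ) ^ 4)⁻¹ * ((y - m) ⬝ᵥ (y - m)) ^ 2 :=
    (le_inv_mul_iff₀ hk4).mpr (pow_four_mul_sq_sum_Sig_succ_mulVec_le hB.posSemidef k (y - m))
  have hdens₀ := gaussDensity_nonneg (hB.inv.add_posSemidef (posSemidef_Sdiag hB k)).posSemidef m
  have hmoment : _ ≤ C / (k : ℝ) ^ 4 :=
    (integral_mul_le_of_le_sq_dotProduct_of_le_exp (inv_nonneg.mpr hk4.le) hD.le hb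
      (fun y => by positivity) hΔ hdens₀ (hdens k m)).trans_eq (by rw [Fintype.card_fin]; ring)
  refine ⟨hmoment, ?_⟩
  calc √_ ≤ √(C / (k : ℝ) ^ 4) := Real.sqrt_le_sqrt hmoment
    _ = √C / (k : ℝ) ^ 2 := by
      rw [Real.sqrt_div' _ hk4.le, show (k : ℝ) ^ 4 = ((k : ℝ) ^ 2) ^ 2 by ring,
        Real.sqrt_sq (by positivity)]

/-- Fourth-moment bound for the one-step change of the variational mean: for `Ỹ ~ N(m, B⁻¹ + S_k)`
and `Δ := Σ_{k+1} B (Ỹ - m)`, there is a constant `C > 0` depending only on `B` and `p` such that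
for every `k ≥ 1` and every `m`, `E[‖Δ‖₂⁴] ≤ C / k⁴`; in particular `√(E[‖Δ‖₂⁴]) ≤ √C / k²`. -/
theorem stmt_18 (p : ℕ) (hp : 1 ≤ p) (B : Matrix (Fin p) (Fin p) ℝ) (hB : B.PosDef) :
    ∃ C : ℝ, 0 < C ∧ ∀ k : ℕ, 1 ≤ k → ∀ m : Fin p → ℝ,
      (∫ y : Fin p → ℝ,
          (∑ i, (Sig B (k + 1) *ᵥ (B *ᵥ (y - m))) i ^ 2) ^ 2 *
            gaussDensity m (B⁻¹ + Sdiag B k) y) ≤ C / (k : ℝ) ^ 4 ∧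
      Real.sqrt
          (∫ y : Fin p → ℝ,
            (∑ i, (Sig B (k + 1) *ᵥ (B *ᵥ (y - m))) i ^ 2) ^ 2 *
              gaussDensity m (B⁻¹ + Sdiag B k) y) ≤ Real.sqrt C / (k : ℝ) ^ 2 :=
  stmt_18_general p B hB
end
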